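/- Fix s > d, let K = ℤ^d, and let A ∈ 𝒜_s (i.e., |a_{kl}| ≤ C(1+|k−l|)^{−s}). Let m be a t-moderate weight on ℤ^d, i.e., m(k+l) ≤ C'(1+|k|)^t m(l) for all k, l, where 0 ≤ t < s − d. Then A defines a bounded operator on ℓ^p_m(ℤ^d) for every 1 ≤ p ≤ ∞. -/

import Mathlib

open scoped ENNReal NNReal

-- Euclidean norm on ℤ^d.
noncomputable def znorm {d : ℕ} (k : Fin d → ℤ) : ℝ :=
  Real.sqrt (∑ i, ((k i : ℝ)) ^ 2)

-- The weighted `ℓ^p_m`-norm (with values in `ℝ≥0∞`), for `1 ≤ p ≤ ∞`.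
noncomputable def wnorm {K : Type*} (p : ℝ≥0∞) (m : K → ℝ) (c : K → ℂ) : ℝ≥0∞ :=
  if p = ∞ then ⨆ k, ((‖c k‖₊ * ‖m k‖₊ : ℝ≥0) : ℝ≥0∞)
  else (∑' k, ((‖c k‖₊ * ‖m k‖₊ : ℝ≥0) : ℝ≥0∞) ^ p.toReal) ^ (1 / p.toReal)

/-! Moderateness gives `m k ≤ C' (1 + |k - l|)^t m l`, so `|a_{kl}| m k ≤ φ (k - l) m l` with
`φ j = C C' (1 + |j|)^(t - s)`: in `ℓ^p_m` the matrix is dominated by convolution with `φ`.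
Since `s - t > d`, `φ` is summable (bound `(1 + |j|)^(-d u)` by `∏ i, (1 + |j_i|)^(-u)` with
`u > 1`), so every row and column sum of the kernel `φ (k - l)` is at most `‖φ‖₁`, and Schur's
test (Hölder's inequality for `p < ∞`) bounds the operator on every `ℓ^p` by `‖φ‖₁`. -/

lemma summable_one_add_abs_int_rpow_neg {u : ℝ} (hu : 1 < u) :
    Summable fun n : ℤ => (1 + |(n : ℝ)|) ^ (-u) := by
  refine (Real.summable_abs_int_rpow hu).of_norm_bounded_eventually ?_
  filter_upwards [Filter.eventually_cofinite_ne 0] with n hn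
  have hn : 0 < |(n : ℝ)| := abs_pos.2 (Int.cast_ne_zero.2 hn)
  rw [Real.norm_of_nonneg (by positivity)]
  exact Real.rpow_le_rpow_of_nonpos hn (by linarith) (by linarith)

lemma ENNReal.tsum_fin_pi_prod {α : Type*} (d : ℕ) (f : α → ℝ≥0∞) :
    ∑' k : Fin d → α, ∏ i, f (k i) = (∑' a, f a) ^ d := by
  induction d with
  | zero => simp
  | succ d ih =>
    rw [← (Fin.consEquiv fun _ => α).tsum_eq, ENNReal.tsum_prod']
    simp only [Fin.consEquiv, Equiv.coe_fn_mk, Fin.prod_univ_succ, Fin.cons_zero, Fin.cons_succ,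
      ENNReal.tsum_mul_left, ih, ENNReal.tsum_mul_right, pow_succ, mul_comm]

lemma znorm_nonneg {d : ℕ} (k : Fin d → ℤ) : 0 ≤ znorm k := Real.sqrt_nonneg _

lemma abs_le_znorm {d : ℕ} (k : Fin d → ℤ) (i : Fin d) : |(k i : ℝ)| ≤ znorm k := by
  rw [← Real.sqrt_sq_eq_abs]
  exact Real.sqrt_le_sqrt (Finset.single_le_sum (f := fun j => ((k j : ℝ)) ^ 2)
    (fun j _ => sq_nonneg _) (Finset.mem_univ i))

lemma one_add_znorm_rpow_neg_le_prod {d : ℕ} {u : ℝ} (hu : 0 ≤ u) (k : Fin d → ℤ) :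
    (1 + znorm k) ^ (-(d * u)) ≤ ∏ i, (1 + |(k i : ℝ)|) ^ (-u) := by
  have hprod : ∏ i, (1 + |(k i : ℝ)|) ≤ (1 + znorm k) ^ d := by
    simpa using Finset.prod_le_prod (s := Finset.univ)
      (f := fun i => 1 + |(k i : ℝ)|) (g := fun _ => 1 + znorm k)
      (fun i _ => by positivity) (fun i _ => by linarith [abs_le_znorm k i])
  rw [Real.finsetProd_rpow _ _ (fun i _ => by positivity), neg_mul_eq_mul_neg,
    Real.rpow_mul (by linarith [znorm_nonneg k]), Real.rpow_natCast]
  exact Real.rpow_le_rpow_of_nonpos (Finset.prod_pos fun i _ => by positivity) hprod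
    (by linarith)

lemma tsum_one_add_znorm_rpow_neg_ne_top {d : ℕ} {r : ℝ} (hr : d < r) :
    ∑' k : Fin d → ℤ, ENNReal.ofReal ((1 + znorm k) ^ (-r)) ≠ ∞ := by
  obtain ⟨u, hu, hdu⟩ : ∃ u : ℝ, 1 < u ∧ d * u ≤ r := by
    have hε : 0 < (r - d) / (d + 1) := div_pos (by linarith) (by positivity)
    refine ⟨1 + (r - d) / (d + 1), by linarith, ?_⟩
    have : d * ((r - d) / (d + 1)) ≤ r - d := by
      rw [mul_div_assoc']
      exact div_le_of_le_mul₀ (by positivity) (by linarith) (by nlinarith)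
    linarith
  have hint : ∑' n : ℤ, ENNReal.ofReal ((1 + |(n : ℝ)|) ^ (-u)) ≠ ∞ := by
    rw [← ENNReal.ofReal_tsum_of_nonneg (fun n => by positivity)
      (summable_one_add_abs_int_rpow_neg hu)]
    exact ENNReal.ofReal_ne_top
  refine ne_top_of_le_ne_top (ENNReal.pow_ne_top (n := d) hint) ?_
  rw [← ENNReal.tsum_fin_pi_prod]
  refine ENNReal.tsum_le_tsum fun k => ?_
  rw [← ENNReal.ofReal_prod_of_nonneg fun i _ => by positivity]
  refine ENNReal.ofReal_le_ofReal ((Real.rpow_le_rpow_of_exponent_le ?_ ?_).trans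
    (one_add_znorm_rpow_neg_le_prod (by linarith) k))
  · linarith [znorm_nonneg k]
  · linarith

noncomputable def lpENorm {ι : Type*} (p : ℝ≥0∞) (x : ι → ℝ≥0∞) : ℝ≥0∞ :=
  if p = ∞ then ⨆ i, x i else (∑' i, x i ^ p.toReal) ^ (1 / p.toReal)

lemma wnorm_eq_lpENorm {K : Type*} (p : ℝ≥0∞) (m : K → ℝ) (c : K → ℂ) :
    wnorm p m c = lpENorm p fun k => ‖c k‖ₑ * ‖m k‖ₑ := by
  simp only [wnorm, lpENorm, ENNReal.coe_mul, enorm_eq_nnnorm]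

lemma lpENorm_mono {ι : Type*} (p : ℝ≥0∞) {x y : ι → ℝ≥0∞} (hxy : ∀ i, x i ≤ y i) :
    lpENorm p x ≤ lpENorm p y := by
  unfold lpENorm
  split_ifs
  · exact iSup_mono hxy
  · gcongr with i
    exact hxy i

lemma ENNReal.tsum_mul_rpow_le {ι : Type*} {q : ℝ} (hq : 1 ≤ q) (w f : ι → ℝ≥0∞) :
    (∑' i, w i * f i) ^ q ≤ (∑' i, w i) ^ (q - 1) * ∑' i, w i * f i ^ q := by
  have holder : ∑' i, w i * f i ≤ (∑' i, w i) ^ (1 - q⁻¹) * (∑' i, w i * f i ^ q) ^ q⁻¹ := by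
    rw [ENNReal.tsum_eq_iSup_sum]
    refine iSup_le fun s => (ENNReal.inner_le_weight_mul_Lp_of_nonneg s hq w f).trans ?_
    have : q⁻¹ ≤ 1 := inv_le_one_of_one_le₀ hq
    gcongr <;> first | linarith | positivity | exact ENNReal.sum_le_tsum s
  have hq0 : 0 < q := by linarith
  calc (∑' i, w i * f i) ^ q
      ≤ ((∑' i, w i) ^ (1 - q⁻¹) * (∑' i, w i * f i ^ q) ^ q⁻¹) ^ q := by gcongr
    _ = (∑' i, w i) ^ (q - 1) * ∑' i, w i * f i ^ q := by
      rw [ENNReal.mul_rpow_of_nonneg _ _ hq0.le, ← ENNReal.rpow_mul, ← ENNReal.rpow_mul,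
        inv_mul_cancel₀ hq0.ne', ENNReal.rpow_one, sub_mul, one_mul, inv_mul_cancel₀ hq0.ne']

section Schur

variable {ι κ : Type*} {B : ι → κ → ℝ≥0∞} {T : ℝ≥0∞}

lemma tsum_kernel_rpow_le {q : ℝ} (hq : 1 ≤ q) (hrow : ∀ i, ∑' j, B i j ≤ T)
    (hcol : ∀ j, ∑' i, B i j ≤ T) (x : κ → ℝ≥0∞) :
    ∑' i, (∑' j, B i j * x j) ^ q ≤ T ^ q * ∑' j, x j ^ q := by
  have hq1 : 0 ≤ q - 1 := by linarith
  calc ∑' i, (∑' j, B i j * x j) ^ q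
      ≤ ∑' i, T ^ (q - 1) * ∑' j, B i j * x j ^ q :=
        ENNReal.tsum_le_tsum fun i => (ENNReal.tsum_mul_rpow_le hq (B i) x).trans
          (by gcongr; exact hrow i)
    _ = T ^ (q - 1) * ∑' j, (∑' i, B i j) * x j ^ q := by
        simp only [ENNReal.tsum_mul_left, ← ENNReal.tsum_mul_right]
        rw [ENNReal.tsum_comm]
    _ ≤ T ^ (q - 1) * ∑' j, T * x j ^ q := by gcongr with j; exact hcol j
    _ = T ^ q * ∑' j, x j ^ q := by
        rw [ENNReal.tsum_mul_left, ← mul_assoc]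
        congr 1
        simpa using (ENNReal.rpow_add_of_nonneg (x := T) (q - 1) 1 hq1 zero_le_one).symm

lemma lpENorm_kernel_le {p : ℝ≥0∞} (hp : 1 ≤ p) (hrow : ∀ i, ∑' j, B i j ≤ T)
    (hcol : ∀ j, ∑' i, B i j ≤ T) (x : κ → ℝ≥0∞) :
    lpENorm p (fun i => ∑' j, B i j * x j) ≤ T * lpENorm p x := by
  unfold lpENorm
  split_ifs with hp_top
  · refine iSup_le fun i => ?_
    calc ∑' j, B i j * x j ≤ ∑' j, B i j * ⨆ j', x j' := by gcongr with j; exact le_iSup x j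
      _ = (∑' j, B i j) * ⨆ j', x j' := ENNReal.tsum_mul_right
      _ ≤ T * ⨆ j', x j' := by gcongr; exact hrow i
  · have hq : 1 ≤ p.toReal := by
      simpa using ENNReal.toReal_mono hp_top hp
    have hq0 : 0 < p.toReal := by linarith
    calc (∑' i, (∑' j, B i j * x j) ^ p.toReal) ^ (1 / p.toReal)
        ≤ (T ^ p.toReal * ∑' j, x j ^ p.toReal) ^ (1 / p.toReal) := by
          gcongr; exact tsum_kernel_rpow_le hq hrow hcol x
      _ = T * (∑' j, x j ^ p.toReal) ^ (1 / p.toReal) := by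
          rw [ENNReal.mul_rpow_of_nonneg _ _ (by positivity), ← ENNReal.rpow_mul,
            mul_one_div_cancel hq0.ne', ENNReal.rpow_one]

end Schur

lemma enorm_tsum_mul_mul_le {κ R : Type*} [NormedDivisionRing R] {a c : κ → R} {μ : ℝ≥0∞}
    {B ν : κ → ℝ≥0∞} (h : ∀ l, ‖a l‖ₑ * μ ≤ B l * ν l) :
    ‖∑' l, a l * c l‖ₑ * μ ≤ ∑' l, B l * (‖c l‖ₑ * ν l) :=
  calc ‖∑' l, a l * c l‖ₑ * μ
      ≤ (∑' l, ‖a l‖ₑ * ‖c l‖ₑ) * μ := by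
        simpa only [enorm_mul] using
          mul_le_mul_left (enorm_tsum_le_tsum_enorm (f := fun l => a l * c l)) μ
    _ = ∑' l, ‖a l‖ₑ * μ * ‖c l‖ₑ := by
        rw [← ENNReal.tsum_mul_right]
        exact tsum_congr fun l => mul_right_comm _ _ _
    _ ≤ ∑' l, B l * ν l * ‖c l‖ₑ := ENNReal.tsum_le_tsum fun l => mul_le_mul_left (h l) _
    _ = ∑' l, B l * (‖c l‖ₑ * ν l) := tsum_congr fun l => by ring

lemma enorm_entry_mul_weight_le {K E : Type*} [AddGroup K] [SeminormedAddGroup E]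
    {ρ : K → ℝ} (hρ : ∀ k, 0 < ρ k) {s t C C' : ℝ} {a : K → K → E} {m : K → ℝ}
    (hC : 0 ≤ C) (hC' : 0 < C') (ha : ∀ k l, ‖a k l‖ ≤ C * ρ (k - l) ^ (-s))
    (hm : ∀ k, 0 < m k) (hmod : ∀ k l, m (k + l) ≤ C' * ρ k ^ t * m l) (k l : K) :
    ‖a k l‖ₑ * ‖m k‖ₑ ≤ ENNReal.ofReal (C * C' * ρ (k - l) ^ (t - s)) * ‖m l‖ₑ := by
  have hmk : m k ≤ C' * ρ (k - l) ^ t * m l := by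
    simpa using hmod (k - l) l
  have hreal : ‖a k l‖ * m k ≤ C * C' * ρ (k - l) ^ (t - s) * m l :=
    calc ‖a k l‖ * m k
        ≤ C * ρ (k - l) ^ (-s) * (C' * ρ (k - l) ^ t * m l) :=
          mul_le_mul (ha k l) hmk (hm k).le (by have := hρ (k - l); positivity)
      _ = C * C' * ρ (k - l) ^ (t - s) * m l := by
          rw [Real.rpow_sub (hρ _), Real.rpow_neg (hρ _).le]; ring
  have hkernel : 0 ≤ C * C' * ρ (k - l) ^ (t - s) := by have := hρ (k - l); positivity
  rw [← ofReal_norm, ← ofReal_norm, ← ofReal_norm, Real.norm_of_nonneg (hm k).le,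
    Real.norm_of_nonneg (hm l).le, ← ENNReal.ofReal_mul (norm_nonneg _),
    ← ENNReal.ofReal_mul hkernel]
  exact ENNReal.ofReal_le_ofReal hreal

theorem jaffard_bounded_weighted_lp_general (d : ℕ) (s t : ℝ)
    (hts : t < s - d)
    (a : (Fin d → ℤ) → (Fin d → ℤ) → ℂ) (C : ℝ) (hC : 0 ≤ C)
    (ha : ∀ k l, ‖a k l‖ ≤ C * (1 + znorm (k - l)) ^ (-s))
    (m : (Fin d → ℤ) → ℝ) (hm : ∀ k, 0 < m k)
    (C' : ℝ) (hC' : 0 < C')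
    (hmod : ∀ k l, m (k + l) ≤ C' * (1 + znorm k) ^ t * m l)
    (p : ℝ≥0∞) (hp : 1 ≤ p) :
    ∃ Cb : ℝ≥0, ∀ c : (Fin d → ℤ) → ℂ,
      wnorm p m (fun k => ∑' l, a k l * c l) ≤ Cb * wnorm p m c := by
  set φ : (Fin d → ℤ) → ℝ≥0∞ := fun j => ENNReal.ofReal (C * C' * (1 + znorm j) ^ (t - s))
  have hφ : ∑' j, φ j ≠ ∞ := by
    simp only [φ, ENNReal.ofReal_mul (by positivity : 0 ≤ C * C'), ENNReal.tsum_mul_left]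
    refine ENNReal.mul_ne_top ENNReal.ofReal_ne_top ?_
    simpa using tsum_one_add_znorm_rpow_neg_ne_top (r := s - t) (by linarith)
  refine ⟨(∑' j, φ j).toNNReal, fun c => ?_⟩
  rw [ENNReal.coe_toNNReal hφ, wnorm_eq_lpENorm, wnorm_eq_lpENorm]
  calc lpENorm p (fun k => ‖∑' l, a k l * c l‖ₑ * ‖m k‖ₑ)
      ≤ lpENorm p (fun k => ∑' l, φ (k - l) * (‖c l‖ₑ * ‖m l‖ₑ)) :=
        lpENorm_mono p fun k => enorm_tsum_mul_mul_le
          (enorm_entry_mul_weight_le (ρ := fun j => 1 + znorm j)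
            (fun j => by linarith [znorm_nonneg j]) hC hC' ha hm hmod k)
    _ ≤ (∑' j, φ j) * lpENorm p (fun l => ‖c l‖ₑ * ‖m l‖ₑ) :=
        lpENorm_kernel_le hp (fun k => ((Equiv.subLeft k).tsum_eq φ).le)
          (fun l => ((Equiv.subRight l).tsum_eq φ).le) _

theorem jaffard_bounded_weighted_lp (d : ℕ) (s t : ℝ)
    (hs : (d : ℝ) < s) (ht0 : 0 ≤ t) (hts : t < s - d)
    (a : (Fin d → ℤ) → (Fin d → ℤ) → ℂ) (C : ℝ) (hC : 0 ≤ C)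
    (ha : ∀ k l, ‖a k l‖ ≤ C * (1 + znorm (k - l)) ^ (-s))
    (m : (Fin d → ℤ) → ℝ) (hm : ∀ k, 0 < m k)
    (C' : ℝ) (hC' : 0 < C')
    (hmod : ∀ k l, m (k + l) ≤ C' * (1 + znorm k) ^ t * m l)
    (p : ℝ≥0∞) (hp : 1 ≤ p) :
    ∃ Cb : ℝ≥0, ∀ c : (Fin d → ℤ) → ℂ,
      wnorm p m (fun k => ∑' l, a k l * c l) ≤ Cb * wnorm p m c :=
  jaffard_bounded_weighted_lp_general d s t hts a C hC ha m hm C' hC' hmod p hp
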